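/- arXiv:2112.01585 — 4 statements merged into one kernel-verified Lean document; each statement's English description precedes it below -/
import Mathlib

section
/- Suppose A, B ∈ ℝ^{d×d} are positive definite matrices with A ⪰ B. Then for any vector x ∈ ℝ^d, ‖x‖_A ≤ ‖x‖_B · √(det(A)/det(B)), where ‖x‖_M := √(xᵀ M x). -/
/-!
Let `S = √B`. Conjugating `B ≤ A` by `S⁻¹` gives `1 ≤ C := S⁻¹ A S⁻¹`, so every eigenvalue of `C`
is at least `1` and hence at most the product of all of them, `det C = det A / det B`. Thus
`C ≤ (det A / det B) • 1`, and conjugating back by `S` gives `A ≤ (det A / det B) • B`; evaluating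
both quadratic forms at `x` and taking square roots yields the inequality.
-/

open Matrix
open scoped MatrixOrder

namespace Matrix

variable {n : Type*} [Fintype n]

theorem dotProduct_mulVec_le_of_le {A B : Matrix n n ℝ} (hAB : A ≤ B) (x : n → ℝ) :
    x ⬝ᵥ A *ᵥ x ≤ x ⬝ᵥ B *ᵥ x := by
  simpa [sub_mulVec, dotProduct_sub] using hAB.dotProduct_mulVec_nonneg x

variable [DecidableEq n]

theorem le_det_smul_one_of_one_le {C : Matrix n n ℝ} (hC : 1 ≤ C) : C ≤ C.det • 1 := by
  have hCh : C.IsHermitian := by simpa using hC.isHermitian.add isHermitian_one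
  have one_le_eig (i : n) : 1 ≤ hCh.eigenvalues i :=
    (CFC.one_le_iff C).1 hC _ (hCh.eigenvalues_mem_spectrum_real i)
  rw [← Algebra.algebraMap_eq_smul_one, le_algebraMap_iff_spectrum_le,
    hCh.spectrum_real_eq_range_eigenvalues, hCh.det_eq_prod_eigenvalues]
  rintro _ ⟨i, rfl⟩
  simpa using Finset.prod_le_prod_of_subset_of_one_le (Finset.subset_univ {i})
    (fun j _ => zero_le_one.trans (one_le_eig j)) (fun j _ _ => one_le_eig j)

theorem PosDef.le_det_div_det_smul_of_le {A B : Matrix n n ℝ} (hB : B.PosDef) (hBA : B ≤ A) :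
    A ≤ (A.det / B.det) • B := by
  set S := CFC.sqrt B
  have hSS : S * S = B := CFC.sqrt_mul_sqrt_self B hB.posSemidef.nonneg
  have hS : IsSelfAdjoint S := (CFC.sqrt_nonneg B).isSelfAdjoint
  have hSdet : IsUnit S.det := by
    rw [← isUnit_iff_isUnit_det]
    exact (CFC.isUnit_sqrt_iff B).2 hB.isUnit
  set C := S⁻¹ * A * S⁻¹
  have one_le_C : 1 ≤ C :=
    calc (1 : Matrix n n ℝ) = S⁻¹ * B * S⁻¹ := by
          rw [← hSS, ← Matrix.mul_assoc, nonsing_inv_mul _ hSdet, Matrix.one_mul,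
            mul_nonsing_inv _ hSdet]
      _ ≤ C := IsSelfAdjoint.conjugate_le_conjugate hBA (IsHermitian.inv hS)
  have det_C : C.det = A.det / B.det := by
    rw [← hSS]
    simp only [C, det_mul, det_nonsing_inv, Ring.inverse_eq_inv]
    field_simp [hSdet.ne_zero]
  have conj_C : S * C * S = A := by
    simp only [C, ← Matrix.mul_assoc, mul_nonsing_inv _ hSdet, Matrix.one_mul]
    rw [Matrix.mul_assoc, nonsing_inv_mul _ hSdet, Matrix.mul_one]
  calc A = S * C * S := conj_C.symm
    _ ≤ S * (C.det • 1) * S := hS.conjugate_le_conjugate (le_det_smul_one_of_one_le one_le_C)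
    _ = (A.det / B.det) • B := by rw [det_C, mul_smul_comm, smul_mul_assoc, Matrix.mul_one, hSS]

end Matrix

theorem norm_le_norm_mul_sqrt_det_ratio_general {d : ℕ} (A B : Matrix (Fin d) (Fin d) ℝ)
    (hB : B.PosDef) (hAB : (A - B).PosSemidef) (x : Fin d → ℝ) :
    Real.sqrt (x ⬝ᵥ A.mulVec x) ≤
      Real.sqrt (x ⬝ᵥ B.mulVec x) * Real.sqrt (A.det / B.det) := by
  have hxBx : 0 ≤ x ⬝ᵥ B *ᵥ x := by simpa using hB.posSemidef.dotProduct_mulVec_nonneg x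
  have hxAx := dotProduct_mulVec_le_of_le (hB.le_det_div_det_smul_of_le hAB) x
  rw [smul_mulVec, dotProduct_smul, smul_eq_mul] at hxAx
  rw [← Real.sqrt_mul hxBx, mul_comm]
  exact Real.sqrt_le_sqrt hxAx

/-- For positive definite A ⪰ B and any x, ‖x‖_A ≤ ‖x‖_B · √(det A / det B),
where ‖x‖_M = √(xᵀ M x). -/
theorem norm_le_norm_mul_sqrt_det_ratio {d : ℕ} (A B : Matrix (Fin d) (Fin d) ℝ)
    (hA : A.PosDef) (hB : B.PosDef) (hAB : (A - B).PosSemidef) (x : Fin d → ℝ) :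
    Real.sqrt (x ⬝ᵥ A.mulVec x) ≤
      Real.sqrt (x ⬝ᵥ B.mulVec x) * Real.sqrt (A.det / B.det) :=
  norm_le_norm_mul_sqrt_det_ratio_general A B hB hAB x
end

section
/- Let v ∈ ℝ^d have i.i.d. coordinates drawn from the standard Laplace distribution Lap(0,1). Then for any α > 0, P(‖v‖₂ > √d · log(d/α)) ≤ α. -/
/-!
If every coordinate satisfies `|v i| ≤ L`, then `‖v‖₂ ≤ √d · L`; so the event is contained in
the union of the `d` coordinate events `{L < |v i|}`, each of Laplace probability at most
`exp (-L)`. The union bound with `L = log (d / α)` gives `d · α / d = α`.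
-/

open MeasureTheory Real Set

noncomputable def laplaceMeasure : Measure ℝ :=
  volume.withDensity fun t => ENNReal.ofReal ((1 / 2) * Real.exp (-|t|))

lemma laplaceMeasure_apply {s : Set ℝ} (hs : MeasurableSet s) :
    laplaceMeasure s = ∫⁻ t in s, ENNReal.ofReal (1 / 2 * exp (-|t|)) :=
  withDensity_apply _ hs

lemma laplaceMeasure_Iic_of_nonpos {c : ℝ} (hc : c ≤ 0) :
    laplaceMeasure (Iic c) = ENNReal.ofReal (1 / 2 * exp c) := by
  have h_density : EqOn (fun t => ENNReal.ofReal (1 / 2 * exp (-|t|)))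
      (fun t => ENNReal.ofReal (1 / 2 * exp t)) (Iic c) := fun t ht => by
    simp only [abs_of_nonpos (le_trans (mem_Iic.mp ht) hc), neg_neg]
  rw [laplaceMeasure_apply measurableSet_Iic, setLIntegral_congr_fun measurableSet_Iic h_density,
    ← ofReal_integral_eq_lintegral_ofReal ((integrableOn_exp_Iic c).const_mul _)
      (.of_forall fun _ => by positivity),
    integral_const_mul, integral_exp_Iic]

lemma laplaceMeasure_Ioi_of_nonneg {c : ℝ} (hc : 0 ≤ c) :
    laplaceMeasure (Ioi c) = ENNReal.ofReal (1 / 2 * exp (-c)) := by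
  have h_density : EqOn (fun t => ENNReal.ofReal (1 / 2 * exp (-|t|)))
      (fun t => ENNReal.ofReal (1 / 2 * exp (-t))) (Ioi c) := fun t ht => by
    simp only [abs_of_pos (lt_of_le_of_lt hc (mem_Ioi.mp ht))]
  rw [laplaceMeasure_apply measurableSet_Ioi, setLIntegral_congr_fun measurableSet_Ioi h_density,
    ← ofReal_integral_eq_lintegral_ofReal ((integrableOn_exp_neg_Ioi c).const_mul _)
      (.of_forall fun _ => by positivity),
    integral_const_mul, integral_exp_neg_Ioi]

instance : IsProbabilityMeasure laplaceMeasure where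
  measure_univ := by
    rw [← Iic_union_Ioi (a := (0 : ℝ)), measure_union (Iic_disjoint_Ioi le_rfl) measurableSet_Ioi,
      laplaceMeasure_Iic_of_nonpos le_rfl, laplaceMeasure_Ioi_of_nonneg le_rfl,
      ← ENNReal.ofReal_add (by positivity) (by positivity)]
    norm_num

lemma laplaceMeasure_lt_abs_le (L : ℝ) :
    laplaceMeasure {t | L < |t|} ≤ ENNReal.ofReal (exp (-L)) := by
  rcases lt_or_ge L 0 with hL | hL
  · calc laplaceMeasure {t | L < |t|} ≤ 1 := prob_le_one
      _ ≤ ENNReal.ofReal (exp (-L)) := by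
        rw [← ENNReal.ofReal_one]
        exact ENNReal.ofReal_le_ofReal (one_le_exp (by linarith))
  have h_tails : {t : ℝ | L < |t|} ⊆ Iic (-L) ∪ Ioi L := fun t (ht : L < |t|) => by
    rcases lt_abs.mp ht with h | h
    · exact Or.inr h
    · exact Or.inl (mem_Iic.mpr (by linarith))
  calc laplaceMeasure {t | L < |t|}
      ≤ laplaceMeasure (Iic (-L)) + laplaceMeasure (Ioi L) :=
        (measure_mono h_tails).trans (measure_union_le _ _)
    _ = ENNReal.ofReal (exp (-L)) := by
        rw [laplaceMeasure_Iic_of_nonpos (by linarith), laplaceMeasure_Ioi_of_nonneg hL,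
          ← ENNReal.ofReal_add (by positivity) (by positivity)]
        ring_nf

section UnionBound

variable {ι : Type*} [Fintype ι] {X : ι → Type*} [∀ i, MeasurableSpace (X i)]
  (μ : ∀ i, Measure (X i)) [∀ i, IsProbabilityMeasure (μ i)]

lemma MeasureTheory.Measure.pi_eval_preimage (i : ι) (s : Set (X i)) :
    Measure.pi μ (Function.eval i ⁻¹' s) = μ i s := by
  classical
  rw [eval_preimage, Measure.pi_pi, Finset.prod_eq_single i
    (fun j _ hj => by rw [Function.update_of_ne hj, measure_univ])
    (fun hi => absurd (Finset.mem_univ i) hi), Function.update_self]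

lemma MeasureTheory.Measure.pi_exists_mem_le (s : ∀ i, Set (X i)) :
    Measure.pi μ {x | ∃ i, x i ∈ s i} ≤ ∑ i, μ i (s i) := by
  have h_union : {x : ∀ i, X i | ∃ i, x i ∈ s i} = ⋃ i, Function.eval i ⁻¹' s i := by
    ext x; simp
  rw [h_union]
  refine (measure_iUnion_fintype_le _ _).trans_eq ?_
  simp only [Measure.pi_eval_preimage]

end UnionBound

lemma sqrt_sum_sq_le_of_forall_abs_le {ι : Type*} [Fintype ι] {v : ι → ℝ} {L : ℝ}
    (h : ∀ i, |v i| ≤ L) : √(∑ i, v i ^ 2) ≤ √(Fintype.card ι) * L := by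
  cases isEmpty_or_nonempty ι
  · simp
  have hL : 0 ≤ L := (abs_nonneg _).trans (h (Classical.arbitrary ι))
  have h_sum : ∑ i, v i ^ 2 ≤ Fintype.card ι * L ^ 2 := by
    calc ∑ i, v i ^ 2 ≤ ∑ _i : ι, L ^ 2 :=
          Finset.sum_le_sum fun i _ => sq_abs (v i) ▸ pow_le_pow_left₀ (abs_nonneg _) (h i) 2
      _ = Fintype.card ι * L ^ 2 := by simp
  calc √(∑ i, v i ^ 2) ≤ √(Fintype.card ι * L ^ 2) := sqrt_le_sqrt h_sum
    _ = √(Fintype.card ι) * L := by rw [sqrt_mul (Nat.cast_nonneg _), sqrt_sq hL]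

lemma mul_exp_neg_log_div_le {x α : ℝ} (hx : 0 ≤ x) (hα : 0 < α) :
    x * exp (-log (x / α)) ≤ α := by
  rcases hx.eq_or_lt with rfl | hx
  · simpa using hα.le
  rw [exp_neg, exp_log (div_pos hx hα), inv_div, mul_div_cancel₀ _ hx.ne']

/-- For v ∈ ℝ^d with i.i.d. standard Laplace coordinates,
P(‖v‖₂ > √d · log(d/α)) ≤ α. -/
theorem laplace_vector_norm_tail_bound (d : ℕ) (α : ℝ) (hα : 0 < α) :
    (Measure.pi fun _ : Fin d => laplaceMeasure)
        {v | Real.sqrt (∑ i, (v i) ^ 2) > Real.sqrt d * Real.log (d / α)}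
      ≤ ENNReal.ofReal α := by
  set L := log (d / α)
  have h_coord : {v : Fin d → ℝ | √(∑ i, v i ^ 2) > √d * L} ⊆ {v | ∃ i, v i ∈ {t | L < |t|}} := by
    intro v hv
    by_contra! h
    exact hv.not_ge (by simpa using sqrt_sum_sq_le_of_forall_abs_le (v := v) (by simpa using h))
  calc (Measure.pi fun _ : Fin d => laplaceMeasure) {v | √(∑ i, v i ^ 2) > √d * L}
      ≤ ∑ _i : Fin d, laplaceMeasure {t | L < |t|} :=
        (measure_mono h_coord).trans (Measure.pi_exists_mem_le _ _)
    _ ≤ ∑ _i : Fin d, ENNReal.ofReal (exp (-L)) :=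
        Finset.sum_le_sum fun _ _ => laplaceMeasure_lt_abs_le L
    _ = ENNReal.ofReal (d * exp (-L)) := by
        rw [← ENNReal.ofReal_sum_of_nonneg fun _ _ => (exp_pos _).le]
        simp
    _ ≤ ENNReal.ofReal α := ENNReal.ofReal_le_ofReal (mul_exp_neg_log_div_le d.cast_nonneg hα)
end

section
/- Let Λ₀ = μ·I_{d×d} with μ > 0 and Λ_K = μ·I + Σ_{i=1}^K φ_iφ_iᵀ with ‖φ_i‖₂ ≤ 1. Consider any increasing sequence of indices 0 = k₀ < k₁ < ⋯ < k_N = K and the set S = {b : log(det(Λ_{k_{b+1}})/det(Λ_{k_b})) > c} for a constant c > 0, where Λ_k = μ·I + Σ_{i=1}^k φ_iφ_iᵀ. Then |S| ≤ (d/c)·log(K/(dμ) + 1). -/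
/-!
A batch with a large jump contributes more than `c` to the telescoping sum
`∑_b log (det Λ_{k_{b+1}} / det Λ_{k_b}) = log (det Λ_K / det Λ_0)`, whose terms are all
nonnegative: by the matrix determinant lemma, adding `φ φᵀ` to a positive definite `A`
multiplies `det A` by `1 + φᵀ A⁻¹ φ ≥ 1`. AM–GM on the eigenvalues bounds `det Λ_K` by
`(tr Λ_K / d) ^ d ≤ (μ + K / d) ^ d`, while `det Λ_0 = μ ^ d`.
-/

open Finset Matrix

theorem Real.prod_le_sum_div_card_pow {ι : Type*} (s : Finset ι) {z : ι → ℝ}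
    (hz : ∀ i ∈ s, 0 ≤ z i) : ∏ i ∈ s, z i ≤ ((∑ i ∈ s, z i) / #s) ^ #s := by
  rcases s.eq_empty_or_nonempty with rfl | hs
  · simp
  have hgm := Real.geom_mean_le_arith_mean s (fun _ => 1) z (fun _ _ => zero_le_one)
    (by simpa using hs.card_pos) hz
  simp only [Real.rpow_one, sum_const, nsmul_eq_mul, mul_one, one_mul] at hgm
  calc ∏ i ∈ s, z i = ((∏ i ∈ s, z i) ^ (#s : ℝ)⁻¹) ^ #s :=
        (Real.rpow_inv_natCast_pow (prod_nonneg hz) hs.card_pos.ne').symm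
    _ ≤ _ := pow_le_pow_left₀ (Real.rpow_nonneg (prod_nonneg hz) _) hgm _

theorem card_filter_lt_sub_mul_le_sub {f : ℕ → ℝ} {N : ℕ} (hf : ∀ b < N, f b ≤ f (b + 1))
    (c : ℝ) : #{b ∈ range N | c < f (b + 1) - f b} * c ≤ f N - f 0 :=
  calc #{b ∈ range N | c < f (b + 1) - f b} * c
      = ∑ _b ∈ range N with c < f (_b + 1) - f _b, c := by rw [sum_const, nsmul_eq_mul]
    _ ≤ ∑ b ∈ range N with c < f (b + 1) - f b, (f (b + 1) - f b) :=
        sum_le_sum fun b hb => (mem_filter.1 hb).2.le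
    _ ≤ ∑ b ∈ range N, (f (b + 1) - f b) :=
        sum_le_sum_of_subset_of_nonneg (filter_subset _ _)
          fun b hb _ => sub_nonneg.2 (hf b (mem_range.1 hb))
    _ = f N - f 0 := sum_range_sub f N

namespace Matrix

variable {n : Type*} [Fintype n] [DecidableEq n]

theorem PosSemidef.det_le_trace_div_card_pow {A : Matrix n n ℝ} (hA : A.PosSemidef) :
    A.det ≤ (A.trace / Fintype.card n) ^ Fintype.card n := by
  rw [hA.isHermitian.det_eq_prod_eigenvalues, hA.isHermitian.trace_eq_sum_eigenvalues]
  simpa using Real.prod_le_sum_div_card_pow univ fun i _ => hA.eigenvalues_nonneg i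

theorem PosDef.det_le_det_add_vecMulVec_self {A : Matrix n n ℝ} (hA : A.PosDef) (v : n → ℝ) :
    A.det ≤ (A + vecMulVec v v).det := by
  rw [vecMulVec_eq Unit, det_add_replicateCol_mul_replicateRow hA.det_pos.ne'.isUnit,
    Matrix.mul_assoc, ← replicateCol_mulVec, det_one_add_mul_comm,
    det_one_add_replicateCol_mul_replicateRow]
  refine le_mul_of_one_le_right hA.det_pos.le (le_add_of_nonneg_right ?_)
  simpa using hA.inv.posSemidef.dotProduct_mulVec_nonneg v

end Matrix

section RegularizedGram

variable {n : Type*} [DecidableEq n] {μ : ℝ} {φ : ℕ → n → ℝ}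

def regularizedGram (μ : ℝ) (φ : ℕ → n → ℝ) (m : ℕ) : Matrix n n ℝ :=
  μ • 1 + ∑ i ∈ range m, vecMulVec (φ i) (φ i)

theorem regularizedGram_succ (m : ℕ) :
    regularizedGram μ φ (m + 1) = regularizedGram μ φ m + vecMulVec (φ m) (φ m) := by
  rw [regularizedGram, regularizedGram, sum_range_succ, add_assoc]

variable [Fintype n]

theorem det_regularizedGram_zero : (regularizedGram μ φ 0).det = μ ^ Fintype.card n := by
  simp [regularizedGram]

theorem posDef_regularizedGram (hμ : 0 < μ) (m : ℕ) : (regularizedGram μ φ m).PosDef :=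
  (PosDef.one.smul hμ).add_posSemidef <|
    posSemidef_sum _ fun i _ => by simpa using posSemidef_vecMulVec_self_star (φ i)

theorem monotone_det_regularizedGram (hμ : 0 < μ) :
    Monotone fun m => (regularizedGram μ φ m).det :=
  monotone_nat_of_le_succ fun m => by
    simpa only [regularizedGram_succ] using
      (posDef_regularizedGram hμ m).det_le_det_add_vecMulVec_self (φ m)

theorem trace_regularizedGram_le (hφ : ∀ i, φ i ⬝ᵥ φ i ≤ 1) (m : ℕ) :
    (regularizedGram μ φ m).trace ≤ Fintype.card n * μ + m := by
  rw [regularizedGram, trace_add, trace_smul, trace_one, trace_sum, smul_eq_mul, mul_comm]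
  gcongr
  simpa [trace_vecMulVec] using sum_le_card_nsmul (range m) _ 1 fun i _ => hφ i

theorem log_det_regularizedGram_sub_le (hμ : 0 < μ) (hφ : ∀ i, φ i ⬝ᵥ φ i ≤ 1) (m : ℕ) :
    Real.log (regularizedGram μ φ m).det - Real.log (regularizedGram μ φ 0).det
      ≤ Fintype.card n * Real.log (m / (Fintype.card n * μ) + 1) := by
  set d := Fintype.card n
  have hpos := posDef_regularizedGram (φ := φ) hμ m
  have hamgm : (regularizedGram μ φ m).det ≤ (μ * (m / (d * μ) + 1)) ^ d := calc
    _ ≤ ((regularizedGram μ φ m).trace / d) ^ d := hpos.posSemidef.det_le_trace_div_card_pow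
    _ ≤ ((d * μ + m) / d) ^ d := by
        have := hpos.posSemidef.trace_nonneg
        gcongr
        exact trace_regularizedGram_le hφ m
    _ = (μ * (m / (d * μ) + 1)) ^ d := by
        rcases eq_or_ne d 0 with hd | hd
        · simp [hd]
        · congr 1; field_simp; ring
  rw [det_regularizedGram_zero, ← Real.log_div hpos.det_pos.ne' (by positivity), ← Real.log_pow]
  refine Real.log_le_log (div_pos hpos.det_pos (by positivity)) ?_
  rwa [div_le_iff₀ (by positivity), ← mul_pow, mul_comm]

end RegularizedGram

theorem count_large_logdet_jumps_general (d K N : ℕ) (μ c : ℝ)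
    (hμ : 0 < μ) (hc : 0 < c)
    (φ : ℕ → Fin d → ℝ) (hφ : ∀ i, Real.sqrt (∑ j, (φ i j) ^ 2) ≤ 1)
    (k : ℕ → ℕ) (hk0 : k 0 = 0) (hkN : k N = K)
    (hkmono : ∀ a b, a < b → b ≤ N → k a < k b)
    (Λ : ℕ → Matrix (Fin d) (Fin d) ℝ)
    (hΛ : ∀ n, Λ n = μ • (1 : Matrix (Fin d) (Fin d) ℝ) +
        ∑ i ∈ Finset.range n, vecMulVec (φ i) (φ i)) :
    (((Finset.range N).filter
        (fun b => c < Real.log ((Λ (k (b + 1))).det / (Λ (k b)).det))).card : ℝ)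
      ≤ (d / c) * Real.log ((K : ℝ) / (d * μ) + 1) := by
  obtain rfl : Λ = regularizedGram μ φ := funext hΛ
  have hdet_pos (m : ℕ) := (posDef_regularizedGram (φ := φ) hμ m).det_pos
  have hφ_dot (i : ℕ) : φ i ⬝ᵥ φ i ≤ 1 := by simpa [dotProduct, sq] using hφ i
  set f : ℕ → ℝ := fun b => Real.log (regularizedGram μ φ (k b)).det
  have hf_mono (b : ℕ) (hb : b < N) : f b ≤ f (b + 1) :=
    Real.log_le_log (hdet_pos _) <|
      monotone_det_regularizedGram hμ (hkmono b (b + 1) b.lt_succ_self hb).le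
  have hjump (b : ℕ) : Real.log
      ((regularizedGram μ φ (k (b + 1))).det / (regularizedGram μ φ (k b)).det) =
        f (b + 1) - f b :=
    Real.log_div (hdet_pos _).ne' (hdet_pos _).ne'
  have htotal : f N - f 0 ≤ d * Real.log ((K : ℝ) / (d * μ) + 1) := by
    simpa [f, hk0, hkN] using log_det_regularizedGram_sub_le hμ hφ_dot K
  simp only [hjump]
  rw [div_mul_eq_mul_div, le_div_iff₀ hc]
  exact (card_filter_lt_sub_mul_le_sub hf_mono c).trans htotal

/-- Counting large log-determinant jumps along a batch schedule: with
Λ_k = μ·I + Σ_{i<k} φ_i φ_iᵀ, ‖φ_i‖₂ ≤ 1, and an increasing schedule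
0 = k₀ < k₁ < ⋯ < k_N = K, the number of batches b with
log(det Λ_{k_{b+1}} / det Λ_{k_b}) > c is at most (d/c)·log(K/(dμ) + 1). -/
theorem count_large_logdet_jumps (d K N : ℕ) (hd : 0 < d) (μ c : ℝ)
    (hμ : 0 < μ) (hc : 0 < c)
    (φ : ℕ → Fin d → ℝ) (hφ : ∀ i, Real.sqrt (∑ j, (φ i j) ^ 2) ≤ 1)
    (k : ℕ → ℕ) (hk0 : k 0 = 0) (hkN : k N = K)
    (hkmono : ∀ a b, a < b → b ≤ N → k a < k b)
    (Λ : ℕ → Matrix (Fin d) (Fin d) ℝ)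
    (hΛ : ∀ n, Λ n = μ • (1 : Matrix (Fin d) (Fin d) ℝ) +
        ∑ i ∈ Finset.range n, vecMulVec (φ i) (φ i)) :
    (((Finset.range N).filter
        (fun b => c < Real.log ((Λ (k (b + 1))).det / (Λ (k b)).det))).card : ℝ)
      ≤ (d / c) * Real.log ((K : ℝ) / (d * μ) + 1) :=
  count_large_logdet_jumps_general d K N μ c hμ hc φ hφ k hk0 hkN hkmono Λ hΛ
end

section
/- For any finite-horizon MDP with horizon H, rewards in [0,1], and linear MDP structure with feature map φ satisfying ‖φ(s,a)‖₂ ≤ 1, ‖θ_h‖₂ ≤ √d, and ‖∫ μ_h(s')v(s')ds'‖₂ ≤ √d·‖v‖_∞: for any policy π and step h, there exists a weight vector w_h^π ∈ ℝ^d with Q_h^π(s,a) = ⟨φ(s,a), w_h^π⟩ for all (s,a), and moreover ‖w_h^π‖₂ ≤ 2H√d. -/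
/-!
Write `V(s') = Q_{h+1}(s', π_{h+1}(s'))`. The Bellman equation and the linearity of `r_h` and
`p_h` in the features give `Q_h(s,a) = ⟨φ(s,a), θ_h + Σ_{s'} V(s') μ_h(s')⟩`. Backward
induction from `Q_H = 0` shows `0 ≤ Q_h ≤ H - h`, so `‖V‖_∞ ≤ H` and the weight has norm at
most `√d + √d·H ≤ 2H√d`.
-/

open Finset

lemma sqrt_sum_sq_add_le {ι : Type*} [Fintype ι] (x y : ι → ℝ) :
    Real.sqrt (∑ j, (x j + y j) ^ 2) ≤
      Real.sqrt (∑ j, x j ^ 2) + Real.sqrt (∑ j, y j ^ 2) := by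
  simpa [EuclideanSpace.norm_eq, Real.norm_eq_abs, sq_abs] using
    norm_add_le (WithLp.toLp 2 x : EuclideanSpace ℝ ι) (WithLp.toLp 2 y)

lemma sum_mul_mem_Icc_of_stochastic {S : Type*} [Fintype S] {p V : S → ℝ} {c : ℝ}
    (hp : ∀ s, 0 ≤ p s) (hp_sum : ∑ s, p s = 1) (hV : ∀ s, V s ∈ Set.Icc 0 c) :
    ∑ s, p s * V s ∈ Set.Icc 0 c := by
  refine ⟨sum_nonneg fun s _ => mul_nonneg (hp s) (hV s).1, ?_⟩
  calc ∑ s, p s * V s ≤ ∑ s, p s * c :=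
        sum_le_sum fun s _ => mul_le_mul_of_nonneg_left (hV s).2 (hp s)
    _ = c := by rw [← sum_mul, hp_sum, one_mul]

lemma bellman_value_mem_Icc {S A : Type*} [Fintype S] (H : ℕ)
    (r : ℕ → S → A → ℝ) (p : ℕ → S → A → S → ℝ) (π : ℕ → S → A) (Q : ℕ → S → A → ℝ)
    (hr01 : ∀ h s a, 0 ≤ r h s a ∧ r h s a ≤ 1)
    (hpnn : ∀ h s a s', 0 ≤ p h s a s')
    (hpsum : ∀ h s a, ∑ s', p h s a s' = 1)
    (hQtop : ∀ s a, Q H s a = 0)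
    (hQ : ∀ h, h < H → ∀ s a,
        Q h s a = r h s a + ∑ s', p h s a s' * Q (h + 1) s' (π (h + 1) s'))
    {h : ℕ} (hh : h ≤ H) (s : S) (a : A) :
    Q h s a ∈ Set.Icc 0 ((H - h : ℕ) : ℝ) := by
  induction hh using Nat.decreasingInduction generalizing s a with
  | self => simp [hQtop]
  | of_succ k hk ih =>
    obtain ⟨hnext_nonneg, hnext_le⟩ :=
      sum_mul_mem_Icc_of_stochastic (hpnn k s a) (hpsum k s a) fun s' => ih s' (π (k + 1) s')
    have hHk : ((H - k : ℕ) : ℝ) = ((H - (k + 1) : ℕ) : ℝ) + 1 := by norm_cast; omega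
    rw [hQ k hk s a, hHk]
    constructor <;> linarith [hr01 k s a]

lemma linear_bellman_backup {ι S : Type*} [Fintype ι] [Fintype S]
    (x θ : ι → ℝ) (μ : S → ι → ℝ) (V : S → ℝ) :
    ∑ j, x j * θ j + ∑ s, (∑ j, x j * μ s j) * V s =
      ∑ j, x j * (θ j + ∑ s, μ s j * V s) := by
  simp only [mul_add, sum_add_distrib, mul_sum, sum_mul, mul_assoc]
  rw [sum_comm (f := fun s j => x j * (μ s j * V s))]

theorem linear_mdp_Q_linear_weight_bound_general
    {S A : Type*} [Fintype S] (d H : ℕ)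
    (φ : S → A → Fin d → ℝ) (θ : ℕ → Fin d → ℝ) (μmap : ℕ → S → Fin d → ℝ)
    (r : ℕ → S → A → ℝ) (p : ℕ → S → A → S → ℝ)
    (π : ℕ → S → A) (Q : ℕ → S → A → ℝ)
    -- rewards in [0,1] and linear
    (hr01 : ∀ h s a, 0 ≤ r h s a ∧ r h s a ≤ 1)
    (hrlin : ∀ h s a, r h s a = ∑ j, φ s a j * θ h j)
    -- transitions are probabilities and linear
    (hpnn : ∀ h s a s', 0 ≤ p h s a s')
    (hpsum : ∀ h s a, ∑ s', p h s a s' = 1)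
    (hplin : ∀ h s a s', p h s a s' = ∑ j, φ s a j * μmap h s' j)
    -- feature and parameter bounds
    (hθ : ∀ h, Real.sqrt (∑ j, (θ h j) ^ 2) ≤ Real.sqrt d)
    (hμ : ∀ h (v : S → ℝ) (Cv : ℝ), (∀ s', |v s'| ≤ Cv) →
        Real.sqrt (∑ j, (∑ s', μmap h s' j * v s') ^ 2) ≤ Real.sqrt d * Cv)
    -- Bellman equations defining Q^π (Q_{H} ≡ 0 beyond the horizon)
    (hQtop : ∀ s a, Q H s a = 0)
    (hQ : ∀ h, h < H → ∀ s a,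
        Q h s a = r h s a + ∑ s', p h s a s' * Q (h + 1) s' (π (h + 1) s'))
    (h : ℕ) (hh : h < H) :
    ∃ w : Fin d → ℝ,
      (∀ s a, Q h s a = ∑ j, φ s a j * w j) ∧
        Real.sqrt (∑ j, (w j) ^ 2) ≤ 2 * H * Real.sqrt d := by
  set V : S → ℝ := fun s' => Q (h + 1) s' (π (h + 1) s')
  have hV : ∀ s', |V s'| ≤ H := fun s' => by
    obtain ⟨hV0, hVle⟩ :=
      bellman_value_mem_Icc H r p π Q hr01 hpnn hpsum hQtop hQ hh s' (π (h + 1) s')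
    rw [abs_le]
    constructor <;> linarith [(Nat.cast_le (α := ℝ)).2 (Nat.sub_le H (h + 1))]
  refine ⟨fun j => θ h j + ∑ s', μmap h s' j * V s', fun s a => ?_, ?_⟩
  · simp only [hQ h hh s a, hrlin, hplin]
    exact linear_bellman_backup _ _ _ V
  · have hH : (1 : ℝ) ≤ H := by exact_mod_cast hh.trans_le' (Nat.zero_le h)
    calc _ ≤ Real.sqrt (∑ j, θ h j ^ 2) +
            Real.sqrt (∑ j, (∑ s', μmap h s' j * V s') ^ 2) := sqrt_sum_sq_add_le _ _
      _ ≤ Real.sqrt d + Real.sqrt d * H := add_le_add (hθ h) (hμ h V H hV)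
      _ ≤ 2 * H * Real.sqrt d := by nlinarith [Real.sqrt_nonneg d]

/-- In a linear MDP (finite states/actions, horizon H, rewards in [0,1],
r_h(s,a) = ⟨φ(s,a), θ_h⟩, p_h(s'|s,a) = ⟨φ(s,a), μmap_h(s')⟩, with
‖φ(s,a)‖₂ ≤ 1, ‖θ_h‖₂ ≤ √d, and ‖Σ_{s'} v(s')·μmap_h(s')‖₂ ≤ √d·‖v‖_∞),
the Q-function of any policy π at any step h is linear in the features with a
weight vector of ℓ2-norm at most 2H√d. -/
theorem linear_mdp_Q_linear_weight_bound
    {S A : Type*} [Fintype S] [Fintype A] (d H : ℕ)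
    (φ : S → A → Fin d → ℝ) (θ : ℕ → Fin d → ℝ) (μmap : ℕ → S → Fin d → ℝ)
    (r : ℕ → S → A → ℝ) (p : ℕ → S → A → S → ℝ)
    (π : ℕ → S → A) (Q : ℕ → S → A → ℝ)
    -- rewards in [0,1] and linear
    (hr01 : ∀ h s a, 0 ≤ r h s a ∧ r h s a ≤ 1)
    (hrlin : ∀ h s a, r h s a = ∑ j, φ s a j * θ h j)
    -- transitions are probabilities and linear
    (hpnn : ∀ h s a s', 0 ≤ p h s a s')
    (hpsum : ∀ h s a, ∑ s', p h s a s' = 1)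
    (hplin : ∀ h s a s', p h s a s' = ∑ j, φ s a j * μmap h s' j)
    -- feature and parameter bounds
    (hφ : ∀ s a, Real.sqrt (∑ j, (φ s a j) ^ 2) ≤ 1)
    (hθ : ∀ h, Real.sqrt (∑ j, (θ h j) ^ 2) ≤ Real.sqrt d)
    (hμ : ∀ h (v : S → ℝ) (Cv : ℝ), (∀ s', |v s'| ≤ Cv) →
        Real.sqrt (∑ j, (∑ s', μmap h s' j * v s') ^ 2) ≤ Real.sqrt d * Cv)
    -- Bellman equations defining Q^π (Q_{H} ≡ 0 beyond the horizon)
    (hQtop : ∀ s a, Q H s a = 0)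
    (hQ : ∀ h, h < H → ∀ s a,
        Q h s a = r h s a + ∑ s', p h s a s' * Q (h + 1) s' (π (h + 1) s'))
    (h : ℕ) (hh : h < H) :
    ∃ w : Fin d → ℝ,
      (∀ s a, Q h s a = ∑ j, φ s a j * w j) ∧
        Real.sqrt (∑ j, (w j) ^ 2) ≤ 2 * H * Real.sqrt d :=
  linear_mdp_Q_linear_weight_bound_general d H φ θ μmap r p π Q hr01 hrlin hpnn hpsum hplin hθ hμ
    hQtop hQ h hh
end
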